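/- arXiv:math/0211379 — 3 statements merged into one kernel-verified Lean document; each statement's English description precedes it below -/
import Mathlib

section
/- Let m and n be positive integers, and set ζ_n = exp(2πi/n) and ζ_m = exp(2πi/m) in ℂ. If ζ_n + ζ_n⁻¹ belongs to the subfield ℚ(ζ_m) of ℂ, then at least one of the following holds: (i) n ∈ {1, 2, 3, 4, 6}; (ii) n divides m; (iii) n is even, n/2 is odd, and n/2 divides m. -/
/-!
Let `K = ℚ(ζ_m)`. Since `ζ_n` is a root of `X² - (ζ_n + ζ_n⁻¹) X + 1 ∈ K[X]`, the extension
`K(ζ_n)/K` has degree at most `2`, and `K(ζ_n)` contains primitive roots of unity of order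
`lcm m n`, so its degree over `ℚ` is at least `φ (lcm m n)`.

If `ζ_n ∈ K`, this gives `φ (lcm m n) ≤ φ m`, which forces `lcm m n = m`, or `lcm m n = 2 m` with
`m` odd. Otherwise there is a `K`-embedding of `K(ζ_n)` sending `ζ_n` to `ζ_n⁻¹`; it acts on the
roots of unity as `y ↦ y ^ k` with `k ≡ 1 [MOD m]` and `k ≡ -1 [MOD n]`, so `gcd m n ∣ 2`. Then
`φ m * φ n = φ (lcm m n) ≤ [K(ζ_n) : ℚ] = 2 φ m`, i.e. `φ n ≤ 2`.
-/

open Polynomial IntermediateField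
open scoped Nat

namespace Nat

theorem totient_lcm_mul_totient_gcd (a b : ℕ) : φ (a.lcm b) * φ (a.gcd b) = φ a * φ b := by
  rcases eq_or_ne a 0 with rfl | ha
  · simp
  have hg : 0 < a.gcd b := gcd_pos_of_pos_left b (pos_of_ne_zero ha)
  have hgl : φ (a.gcd b * a.lcm b) = a.gcd b * φ (a.lcm b) := by
    have h := totient_gcd_mul_totient_mul (a.gcd b) (a.lcm b)
    rw [Nat.gcd_eq_left ((gcd_dvd_left a b).trans (dvd_lcm_left a b))] at h
    exact Nat.eq_of_mul_eq_mul_left (totient_pos.2 hg) (by rw [h]; ring)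
  have h := totient_gcd_mul_totient_mul a b
  rw [← gcd_mul_lcm a b, hgl] at h
  exact Nat.eq_of_mul_eq_mul_right hg (by rw [← h]; ring)

theorem totient_lcm_of_gcd_dvd_two {a b : ℕ} (h : a.gcd b ∣ 2) :
    φ (a.lcm b) = φ a * φ b := by
  have h1 : φ (a.gcd b) = 1 := totient_eq_one_iff.2 ((dvd_prime prime_two).1 h)
  simpa [h1] using totient_lcm_mul_totient_gcd a b

theorem mem_of_totient_le_two {n : ℕ} (hn : 0 < n) (h : φ n ≤ 2) :
    n ∈ ({1, 2, 3, 4, 6} : Finset ℕ) := by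
  have hsub : n.primeFactors ⊆ {2, 3} := by
    intro p hp
    have hp' := prime_of_mem_primeFactors hp
    have hdvd := totient_dvd_of_dvd (dvd_of_mem_primeFactors hp)
    rw [totient_prime hp'] at hdvd
    have : p ≤ 3 := by have := le_of_dvd (totient_pos.2 hn) hdvd; omega
    have := hp'.two_le
    interval_cases p <;> simp_all
  have hle : n ≤ 12 := calc
    n ≤ n * ∏ p ∈ n.primeFactors, (p - 1) :=
      le_mul_of_one_le_right' <| Finset.one_le_prod' fun p hp => by
        have := (prime_of_mem_primeFactors hp).two_le; omega
    _ = φ n * ∏ p ∈ n.primeFactors, p := (totient_mul_prod_primeFactors n).symm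
    _ ≤ 2 * ∏ p ∈ ({2, 3} : Finset ℕ), p :=
      Nat.mul_le_mul h (Finset.prod_le_prod_of_subset_of_one_le' hsub (by simp))
    _ = 12 := by decide
  interval_cases n <;> revert h <;> decide

theorem dvd_or_odd_and_dvd_two_mul_of_totient_lcm_le {m n : ℕ} (hm : 0 < m) (hn : 0 < n)
    (h : φ (m.lcm n) ≤ φ m) : n ∣ m ∨ (Odd m ∧ n ∣ 2 * m) := by
  have heq : φ m = φ (m.lcm n) := le_antisymm
    (le_of_dvd (totient_pos.2 (lcm_pos hm hn)) (totient_dvd_of_dvd (dvd_lcm_left m n))) h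
  rcases eq_or_eq_of_totient_eq_totient (dvd_lcm_left m n) heq with hL | hL
  · exact Or.inl (hL ▸ dvd_lcm_right m n)
  rcases even_or_odd m with he | ho
  · exact Or.inl (he.eq_of_totient_eq_totient (dvd_lcm_left m n) heq ▸ dvd_lcm_right m n)
  · exact Or.inr ⟨ho, hL ▸ dvd_lcm_right m n⟩

theorem dvd_or_even_and_half_dvd_of_dvd_two_mul {n m : ℕ} (hn : n ∣ 2 * m) (hm : Odd m) :
    n ∣ m ∨ (Even n ∧ Odd (n / 2) ∧ n / 2 ∣ m) := by
  rcases Nat.even_or_odd n with ⟨u, rfl⟩ | hodd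
  · have hu : u ∣ m := by
      rw [← two_mul] at hn
      exact Nat.dvd_of_mul_dvd_mul_left two_pos hn
    right
    refine ⟨⟨u, rfl⟩, ?_, ?_⟩ <;> rw [← two_mul, Nat.mul_div_cancel_left u two_pos]
    · exact hm.of_dvd_nat hu
    · exact hu
  · exact Or.inl (hodd.coprime_two_right.dvd_of_dvd_mul_left hn)

theorem gcd_dvd_two_of_dvd_sub_one_of_dvd_add_one {m n : ℕ} {k : ℤ} (hm : (m : ℤ) ∣ k - 1)
    (hn : (n : ℤ) ∣ k + 1) : m.gcd n ∣ 2 := by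
  have h : ((m.gcd n : ℕ) : ℤ) ∣ k + 1 - (k - 1) :=
    Int.dvd_sub ((Int.natCast_dvd_natCast.2 (gcd_dvd_right m n)).trans hn)
    ((Int.natCast_dvd_natCast.2 (gcd_dvd_left m n)).trans hm)
  rw [add_sub_sub_cancel, one_add_one_eq_two] at h
  exact_mod_cast h

end Nat

theorem IsPrimitiveRoot.exists_map_eq_pow {F R : Type*} [Field F] [CommRing R] [IsDomain R]
    {ζ : F} {L : ℕ} [NeZero L] (hζ : IsPrimitiveRoot ζ L) (σ τ : F →+* R) :
    ∃ k : ℕ, ∀ y : F, y ^ L = 1 → σ y = τ y ^ k := by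
  obtain ⟨k, -, hk⟩ := (hζ.map_of_injective τ.injective).eq_pow_of_pow_eq_one
    (ξ := σ ζ) (by rw [← map_pow, hζ.pow_eq_one, map_one])
  refine ⟨k, fun y hy => ?_⟩
  obtain ⟨i, -, rfl⟩ := hζ.eq_pow_of_pow_eq_one hy
  rw [map_pow, map_pow, ← hk, ← pow_mul, ← pow_mul, mul_comm]

theorem IsPrimitiveRoot.gcd_dvd_two_of_map_eq_inv {F R : Type*} [Field F] [Field R] {a b : F}
    {m n : ℕ} [NeZero m] [NeZero n] (ha : IsPrimitiveRoot a m) (hb : IsPrimitiveRoot b n)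
    (σ τ : F →+* R) (hσa : σ a = τ a) (hσb : σ b = (τ b)⁻¹) : m.gcd n ∣ 2 := by
  have : NeZero (m.lcm n) := ⟨Nat.lcm_ne_zero (NeZero.ne m) (NeZero.ne n)⟩
  obtain ⟨k, hk⟩ := (ha.pow_mul_pow_lcm hb (NeZero.ne m) (NeZero.ne n)).exists_map_eq_pow σ τ
  have ha' := ha.map_of_injective τ.injective
  have hb' := hb.map_of_injective τ.injective
  have ha0 : τ a ≠ 0 := ha'.ne_zero (NeZero.ne m)
  have hb0 : τ b ≠ 0 := hb'.ne_zero (NeZero.ne n)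
  have hak : τ a ^ k = τ a :=
    (hk a ((ha.pow_eq_one_iff_dvd _).2 (Nat.dvd_lcm_left m n))).symm.trans hσa
  have hbk : τ b ^ k = (τ b)⁻¹ :=
    (hk b ((hb.pow_eq_one_iff_dvd _).2 (Nat.dvd_lcm_right m n))).symm.trans hσb
  refine Nat.gcd_dvd_two_of_dvd_sub_one_of_dvd_add_one (k := k) ?_ ?_
  · rw [← ha'.zpow_eq_one_iff_dvd, zpow_sub_one₀ ha0, zpow_natCast, hak, mul_inv_cancel₀ ha0]
  · rw [← hb'.zpow_eq_one_iff_dvd, zpow_add_one₀ hb0, zpow_natCast, hbk, inv_mul_cancel₀ hb0]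

section AddInv

variable {K E : Type*} [Field K] [Field E] [Algebra K E] {x : E} {s : K}

theorem aeval_quadratic_of_add_inv (hx : x ≠ 0) (hs : algebraMap K E s = x + x⁻¹) :
    aeval x (X ^ 2 - C s * X + 1 : K[X]) = 0 := by
  simp only [map_add, map_sub, map_mul, map_pow, aeval_X, aeval_C, map_one, hs]
  field_simp
  ring

theorem isIntegral_of_add_inv (hx : x ≠ 0) (hs : algebraMap K E s = x + x⁻¹) :
    IsIntegral K x :=
  ⟨_, by monicity!, aeval_quadratic_of_add_inv hx hs⟩

theorem minpoly_eq_of_add_inv (hx : x ≠ 0) (hs : algebraMap K E s = x + x⁻¹)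
    (hxK : x ∉ (algebraMap K E).range) : minpoly K x = X ^ 2 - C s * X + 1 := by
  have hint := isIntegral_of_add_inv hx hs
  refine (eq_of_monic_of_dvd_of_natDegree_le (minpoly.monic hint) (by monicity!)
    (minpoly.dvd K x (aeval_quadratic_of_add_inv hx hs)) ?_).symm
  have := (minpoly.two_le_natDegree_iff hint).2 hxK
  have : (X ^ 2 - C s * X + 1 : K[X]).natDegree = 2 := by compute_degree!
  omega

theorem finrank_adjoin_of_add_inv (hx : x ≠ 0) (hs : algebraMap K E s = x + x⁻¹)
    (hxK : x ∉ (algebraMap K E).range) : Module.finrank K K⟮x⟯ = 2 := by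
  rw [adjoin.finrank (isIntegral_of_add_inv hx hs), minpoly_eq_of_add_inv hx hs hxK]
  compute_degree!

theorem exists_algHom_adjoin_gen_eq_inv (hx : x ≠ 0) (hs : algebraMap K E s = x + x⁻¹)
    (hxK : x ∉ (algebraMap K E).range) :
    ∃ σ : K⟮x⟯ →ₐ[K] E, σ (AdjoinSimple.gen K x) = x⁻¹ := by
  have hint := isIntegral_of_add_inv hx hs
  have hroot : x⁻¹ ∈ (minpoly K x).aroots E := by
    refine mem_aroots.2 ⟨minpoly.ne_zero hint, ?_⟩
    rw [minpoly_eq_of_add_inv hx hs hxK]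
    exact aeval_quadratic_of_add_inv (inv_ne_zero hx) (by rw [hs, inv_inv, add_comm])
  exact ⟨_, algHomAdjoinIntegralEquiv_symm_apply_gen K hint ⟨x⁻¹, hroot⟩⟩

end AddInv

namespace IsPrimitiveRoot

variable {E : Type*} [Field E] [CharZero E] {ζ ξ : E} {m n : ℕ} [NeZero m] [NeZero n]

theorem finrank_adjoin (hζ : IsPrimitiveRoot ζ m) : Module.finrank ℚ ℚ⟮ζ⟯ = φ m :=
  have : IsCyclotomicExtension {m} ℚ ℚ⟮ζ⟯ :=
    (isCyclotomicExtension_singleton_iff_eq_adjoin m ℚ E _ hζ).2 rfl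
  IsCyclotomicExtension.finrank _ (cyclotomic.irreducible_rat (NeZero.pos m))

theorem totient_le_two_of_add_inv_mem (hζ : IsPrimitiveRoot ζ m) (hξ : IsPrimitiveRoot ξ n)
    (hmem : ξ + ξ⁻¹ ∈ ℚ⟮ζ⟯) (hnot : ξ ∉ ℚ⟮ζ⟯) : φ n ≤ 2 := by
  set K := ℚ⟮ζ⟯
  have hξ0 : ξ ≠ 0 := hξ.ne_zero (NeZero.ne n)
  have hs : algebraMap K E ⟨_, hmem⟩ = ξ + ξ⁻¹ := rfl
  have hξK : ξ ∉ (algebraMap K E).range := by simpa using hnot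
  obtain ⟨σ, hσ⟩ := exists_algHom_adjoin_gen_eq_inv hξ0 hs hξK
  have hζF : IsPrimitiveRoot (algebraMap K K⟮ξ⟯ (AdjoinSimple.gen ℚ ζ)) m :=
    (coe_submonoidClass_iff.mp hζ).map_of_injective (algebraMap K K⟮ξ⟯).injective
  have hξF : IsPrimitiveRoot (AdjoinSimple.gen K ξ) n := coe_submonoidClass_iff.mp hξ
  have hgcd : m.gcd n ∣ 2 :=
    hζF.gcd_dvd_two_of_map_eq_inv hξF σ.toRingHom (algebraMap K⟮ξ⟯ E) (σ.commutes _) hσ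
  have hF : Module.finrank ℚ K⟮ξ⟯ = φ m * 2 := by
    rw [← Module.finrank_mul_finrank ℚ K, hζ.finrank_adjoin,
      finrank_adjoin_of_add_inv hξ0 hs hξK]
  have : FiniteDimensional ℚ K⟮ξ⟯ := Module.finite_of_finrank_pos <| by
    rw [hF]; exact Nat.mul_pos (Nat.totient_pos.2 (NeZero.pos m)) two_pos
  have hle := hζF.lcm_totient_le_finrank hξF (cyclotomic.irreducible_rat
    (Nat.lcm_pos (NeZero.pos m) (NeZero.pos n)))
  rw [Nat.totient_lcm_of_gcd_dvd_two hgcd, hF] at hle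
  exact Nat.le_of_mul_le_mul_left hle (Nat.totient_pos.2 (NeZero.pos m))

theorem dvd_or_odd_and_dvd_two_mul_of_mem_adjoin (hζ : IsPrimitiveRoot ζ m)
    (hξ : IsPrimitiveRoot ξ n) (hmem : ξ ∈ ℚ⟮ζ⟯) : n ∣ m ∨ (Odd m ∧ n ∣ 2 * m) := by
  have : FiniteDimensional ℚ ℚ⟮ζ⟯ := Module.finite_of_finrank_pos <| by
    rw [hζ.finrank_adjoin]; exact Nat.totient_pos.2 (NeZero.pos m)
  have hζK : IsPrimitiveRoot (AdjoinSimple.gen ℚ ζ) m := coe_submonoidClass_iff.mp hζ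
  have hξK : IsPrimitiveRoot (⟨ξ, hmem⟩ : ℚ⟮ζ⟯) n := coe_submonoidClass_iff.mp hξ
  have hle := hζK.lcm_totient_le_finrank hξK
    (cyclotomic.irreducible_rat (Nat.lcm_pos (NeZero.pos m) (NeZero.pos n)))
  rw [hζ.finrank_adjoin] at hle
  exact Nat.dvd_or_odd_and_dvd_two_mul_of_totient_lcm_le (NeZero.pos m) (NeZero.pos n) hle

end IsPrimitiveRoot

/-- If `ζ_n + ζ_n⁻¹` lies in `ℚ(ζ_m)`, then `n ∈ {1,2,3,4,6}`,
or `n ∣ m`, or `n` is even, `n/2` is odd and `n/2 ∣ m`. -/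
theorem zeta_sum_mem_cyclotomic_field (m n : ℕ) (hm : 0 < m) (hn : 0 < n)
    (ζn ζm : ℂ)
    (hζn : ζn = Complex.exp (2 * Real.pi * Complex.I / n))
    (hζm : ζm = Complex.exp (2 * Real.pi * Complex.I / m))
    (h : ζn + ζn⁻¹ ∈ IntermediateField.adjoin ℚ {ζm}) :
    n ∈ ({1, 2, 3, 4, 6} : Set ℕ) ∨ n ∣ m ∨ (Even n ∧ Odd (n / 2) ∧ (n / 2) ∣ m) := by
  have : NeZero m := ⟨hm.ne'⟩
  have : NeZero n := ⟨hn.ne'⟩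
  have hζm' : IsPrimitiveRoot ζm m := hζm ▸ Complex.isPrimitiveRoot_exp m hm.ne'
  have hζn' : IsPrimitiveRoot ζn n := hζn ▸ Complex.isPrimitiveRoot_exp n hn.ne'
  by_cases hmem : ζn ∈ ℚ⟮ζm⟯
  · rcases hζm'.dvd_or_odd_and_dvd_two_mul_of_mem_adjoin hζn' hmem with hdvd | ⟨hodd, hdvd⟩
    · exact Or.inr (Or.inl hdvd)
    · exact Or.inr (Nat.dvd_or_even_and_half_dvd_of_dvd_two_mul hdvd hodd)
  · left
    simpa using Nat.mem_of_totient_le_two hn (hζm'.totient_le_two_of_add_inv_mem hζn' h hmem)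
end

section
/- Let A, B ∈ SL₂(ℂ). Then for every element W of the subgroup of SL₂(ℂ) generated by A and B, the trace of W lies in the subring of ℂ generated by trace(A), trace(B) and trace(AB); that is, the trace of any word in A and B is an integral polynomial in the traces of A, B and AB. -/
open Matrix

namespace FrickeAux

set_option linter.unreachableTactic false
set_option linter.unusedTactic false

abbrev M2 := Matrix (Fin 2) (Fin 2) ℂ

/-- Cayley–Hamilton for 2×2 matrices of determinant 1. -/
lemma sq_eq (u : M2) (h : u.det = 1) : u * u = u.trace • u - 1 := by
  rw [det_fin_two] at h
  ext i j
  fin_cases i <;> fin_cases j <;>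
    simp [Matrix.mul_apply, Fin.sum_univ_two, Matrix.trace, Matrix.diag,
      Matrix.one_apply, Matrix.smul_apply] <;>
    first | ring1 | linear_combination h | linear_combination -h |
      linear_combination 2*h | linear_combination -2*h

/-- Polarized Cayley–Hamilton. -/
lemma ba_eq (a b : M2) :
    b * a = ((a*b).trace - a.trace * b.trace) • (1 : M2)
      + b.trace • a + a.trace • b - a * b := by
  ext i j
  fin_cases i <;> fin_cases j <;>
    (simp [Matrix.mul_apply, Fin.sum_univ_two, Matrix.trace, Matrix.diag,
      Matrix.one_apply, Matrix.smul_apply]; ring)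

lemma aba_eq (a b : M2) (ha : a.det = 1) :
    a * b * a = (a*b).trace • a + b - b.trace • (1 : M2) := by
  have h1 : a * (b * a) = a * b * a := by rw [mul_assoc]
  rw [← h1, ba_eq a b]
  simp only [mul_sub, mul_add, mul_smul_comm, mul_one, ← mul_assoc,
    sq_eq a ha, sub_mul, smul_mul_assoc, one_mul]
  module

/-- Inverse in SL₂ via trace. -/
lemma inv_coe (U : Matrix.SpecialLinearGroup (Fin 2) ℂ) :
    ((U⁻¹ : Matrix.SpecialLinearGroup (Fin 2) ℂ) : M2)
      = (U : M2).trace • (1 : M2) - (U : M2) := by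
  rw [Matrix.SpecialLinearGroup.coe_inv, Matrix.adjugate_fin_two]
  ext i j
  fin_cases i <;> fin_cases j <;>
    simp [Matrix.trace, Matrix.diag, Fin.sum_univ_two, Matrix.one_apply] <;> ring

/-- `m` is an `S`-linear combination of `1, a, b, ab`. -/
def Rep (S : Subring ℂ) (a b m : M2) : Prop :=
  ∃ p q r s : ℂ, p ∈ S ∧ q ∈ S ∧ r ∈ S ∧ s ∈ S ∧
    m = p • (1 : M2) + q • a + r • b + s • (a * b)

variable {S : Subring ℂ} {a b m n : M2}

lemma Rep.one : Rep S a b 1 :=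
  ⟨1, 0, 0, 0, one_mem _, zero_mem _, zero_mem _, zero_mem _, by module⟩

lemma Rep.gen_a : Rep S a b a :=
  ⟨0, 1, 0, 0, zero_mem _, one_mem _, zero_mem _, zero_mem _, by module⟩

lemma Rep.gen_b : Rep S a b b :=
  ⟨0, 0, 1, 0, zero_mem _, zero_mem _, one_mem _, zero_mem _, by module⟩

lemma Rep.mul_a (ha : a.det = 1) (hα : a.trace ∈ S) (hβ : b.trace ∈ S)
    (hγ : (a*b).trace ∈ S) (h : Rep S a b m) : Rep S a b (m * a) := by
  obtain ⟨p, q, r, s, hp, hq, hr, hs, rfl⟩ := h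
  refine ⟨-q + r * ((a*b).trace - a.trace * b.trace) - s * b.trace,
    p + q * a.trace + r * b.trace + s * (a*b).trace,
    r * a.trace + s, -r, ?_, ?_, ?_, ?_, ?_⟩
  · exact sub_mem (add_mem (neg_mem hq) (mul_mem hr (sub_mem hγ (mul_mem hα hβ))))
      (mul_mem hs hβ)
  · exact add_mem (add_mem (add_mem hp (mul_mem hq hα)) (mul_mem hr hβ)) (mul_mem hs hγ)
  · exact add_mem (mul_mem hr hα) hs
  · exact neg_mem hr
  · simp only [add_mul, smul_mul_assoc, one_mul, sq_eq a ha, ba_eq a b, aba_eq a b ha]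
    module

lemma Rep.mul_b (hb : b.det = 1) (hβ : b.trace ∈ S) (h : Rep S a b m) :
    Rep S a b (m * b) := by
  obtain ⟨p, q, r, s, hp, hq, hr, hs, rfl⟩ := h
  refine ⟨-r, -s, p + r * b.trace, q + s * b.trace, neg_mem hr, neg_mem hs,
    add_mem hp (mul_mem hr hβ), add_mem hq (mul_mem hs hβ), ?_⟩
  simp only [add_mul, smul_mul_assoc, one_mul, mul_assoc, sq_eq b hb,
    mul_sub, mul_smul_comm, mul_one]
  module

lemma Rep.smul_sub {t : ℂ} (ht : t ∈ S) (h1 : Rep S a b m) (h2 : Rep S a b n) :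
    Rep S a b (t • m - n) := by
  obtain ⟨p, q, r, s, hp, hq, hr, hs, rfl⟩ := h1
  obtain ⟨p', q', r', s', hp', hq', hr', hs', rfl⟩ := h2
  exact ⟨t * p - p', t * q - q', t * r - r', t * s - s',
    sub_mem (mul_mem ht hp) hp', sub_mem (mul_mem ht hq) hq',
    sub_mem (mul_mem ht hr) hr', sub_mem (mul_mem ht hs) hs', by module⟩

lemma Rep.trace_mem (hα : a.trace ∈ S) (hβ : b.trace ∈ S) (hγ : (a*b).trace ∈ S)
    (h : Rep S a b m) : m.trace ∈ S := by
  obtain ⟨p, q, r, s, hp, hq, hr, hs, rfl⟩ := h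
  simp only [Matrix.trace_add, Matrix.trace_smul, Matrix.trace_one, smul_eq_mul]
  have h2 : (Fintype.card (Fin 2) : ℂ) ∈ S := by
    simpa using natCast_mem S 2
  exact add_mem (add_mem (add_mem (mul_mem hp h2) (mul_mem hq hα)) (mul_mem hr hβ))
    (mul_mem hs hγ)

end FrickeAux

open FrickeAux in
/-- The trace of any word in `A, B ∈ SL₂(ℂ)` lies in the subring of `ℂ`
generated by `trace A`, `trace B` and `trace (AB)`. -/
theorem trace_word_mem_subring (A B : Matrix.SpecialLinearGroup (Fin 2) ℂ)
    (W : Matrix.SpecialLinearGroup (Fin 2) ℂ)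
    (hW : W ∈ Subgroup.closure ({A, B} : Set (Matrix.SpecialLinearGroup (Fin 2) ℂ))) :
    Matrix.trace (W : Matrix (Fin 2) (Fin 2) ℂ) ∈
      Subring.closure ({Matrix.trace (A : Matrix (Fin 2) (Fin 2) ℂ),
        Matrix.trace (B : Matrix (Fin 2) (Fin 2) ℂ),
        Matrix.trace ((A * B : Matrix.SpecialLinearGroup (Fin 2) ℂ) :
          Matrix (Fin 2) (Fin 2) ℂ)} : Set ℂ) := by
  set a : M2 := (A : Matrix (Fin 2) (Fin 2) ℂ) with ha_def
  set b : M2 := (B : Matrix (Fin 2) (Fin 2) ℂ) with hb_def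
  set S : Subring ℂ := Subring.closure {a.trace, b.trace,
    Matrix.trace ((A * B : Matrix.SpecialLinearGroup (Fin 2) ℂ) :
      Matrix (Fin 2) (Fin 2) ℂ)} with hS_def
  have hab : ((A * B : Matrix.SpecialLinearGroup (Fin 2) ℂ) :
      Matrix (Fin 2) (Fin 2) ℂ) = a * b := rfl
  have hα : a.trace ∈ S := Subring.subset_closure (by simp)
  have hβ : b.trace ∈ S := Subring.subset_closure (by simp)
  have hγ : (a * b).trace ∈ S := Subring.subset_closure (by rw [← hab]; simp)
  have hdetA : a.det = 1 := A.prop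
  have hdetB : b.det = 1 := B.prop
  have key : Rep S a b (W : M2) := by
    refine Subgroup.closure_induction_right
        (p := fun (x : Matrix.SpecialLinearGroup (Fin 2) ℂ) _ => Rep S a b (x : M2))
        ?_ ?_ ?_ hW
    · simpa using (Rep.one : Rep S a b 1)
    · rintro x hx y (h | h) hrep <;> rw [h]
      · exact (Matrix.SpecialLinearGroup.coe_mul x A) ▸ hrep.mul_a hdetA hα hβ hγ
      · exact (Matrix.SpecialLinearGroup.coe_mul x B) ▸ hrep.mul_b hdetB hβ
    · rintro x hx y (h | h) hrep <;> rw [h]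
      · have : ((x * A⁻¹ : Matrix.SpecialLinearGroup (Fin 2) ℂ) : M2)
            = a.trace • (x : M2) - (x : M2) * a := by
          rw [Matrix.SpecialLinearGroup.coe_mul, inv_coe, mul_sub, mul_smul_comm, mul_one]
        rw [this]
        exact Rep.smul_sub hα hrep (hrep.mul_a hdetA hα hβ hγ)
      · have : ((x * B⁻¹ : Matrix.SpecialLinearGroup (Fin 2) ℂ) : M2)
            = b.trace • (x : M2) - (x : M2) * b := by
          rw [Matrix.SpecialLinearGroup.coe_mul, inv_coe, mul_sub, mul_smul_comm, mul_one]
        rw [this]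
        exact Rep.smul_sub hβ hrep (hrep.mul_b hdetB hβ)
  exact key.trace_mem hα hβ hγ
end

section
/- Let a, b, c be positive integers, and let A, B ∈ SL₂(ℂ) be matrices satisfying A^{2a} = B^{2b} = (AB)^{2c} = I. Set h = 2·lcm(a,b,c) and ζ_h = exp(2πi/h) ∈ ℂ. Then for every element W of the subgroup of SL₂(ℂ) generated by A and B, the trace of W lies in the subfield ℚ(ζ_h) of ℂ. -/
open Matrix Polynomial

/-- Cayley–Hamilton for 2×2 matrices. -/
private lemma CH2 (M : Matrix (Fin 2) (Fin 2) ℂ) :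
    M * M = Matrix.trace M • M - Matrix.det M • 1 := by
  ext i j
  fin_cases i <;> fin_cases j <;>
    simp [Matrix.mul_apply, Fin.sum_univ_two, Matrix.trace_fin_two, Matrix.det_fin_two,
      Matrix.one_apply, Matrix.sub_apply, Matrix.smul_apply, smul_eq_mul] <;> ring

/-- Polarized Cayley–Hamilton for 2×2 matrices. -/
private lemma CH2' (M N : Matrix (Fin 2) (Fin 2) ℂ) :
    M * N + N * M = Matrix.trace M • N + Matrix.trace N • M +
      (Matrix.trace (M * N) - Matrix.trace M * Matrix.trace N) • 1 := by
  ext i j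
  fin_cases i <;> fin_cases j <;>
    simp [Matrix.mul_apply, Fin.sum_univ_two, Matrix.trace_fin_two,
      Matrix.one_apply, Matrix.add_apply, Matrix.smul_apply, smul_eq_mul] <;> ring

/-- The trace of an `SL₂(ℂ)` element of finite order dividing `h` lies in `ℚ(ζ_h)`. -/
private lemma sl2_trace_mem (h : ℕ) (hh0 : h ≠ 0) (ζ : ℂ) (hζ : IsPrimitiveRoot ζ h)
    (M : Matrix.SpecialLinearGroup (Fin 2) ℂ) (hM : M ^ h = 1) :
    Matrix.trace (M : Matrix (Fin 2) (Fin 2) ℂ) ∈ IntermediateField.adjoin ℚ {ζ} := by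
  haveI : NeZero h := ⟨hh0⟩
  set N := (M : Matrix (Fin 2) (Fin 2) ℂ) with hN
  set t := Matrix.trace N with ht
  have hdet : N.det = 1 := M.prop
  -- find a root of X² - tX + 1
  obtain ⟨μ, hμroot⟩ := Complex.exists_root
    (f := C 1 * X ^ 2 + C (-t) * X + C 1)
    (by rw [Polynomial.degree_quadratic one_ne_zero]; norm_num)
  have hquad : μ ^ 2 - t * μ + 1 = 0 := by
    have := hμroot
    simp only [Polynomial.IsRoot, Polynomial.eval_add, Polynomial.eval_mul, Polynomial.eval_pow,
      Polynomial.eval_C, Polynomial.eval_X] at this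
    linear_combination this
  have hμ0 : μ ≠ 0 := by
    intro h0
    rw [h0] at hquad; norm_num at hquad
  -- μ is an eigenvalue
  have hd2 : N 0 0 * N 1 1 - N 0 1 * N 1 0 = 1 := by
    rw [← Matrix.det_fin_two]; exact hdet
  have ht2 : t = N 0 0 + N 1 1 := by rw [ht, Matrix.trace_fin_two]
  have h0 : (μ • (1 : Matrix (Fin 2) (Fin 2) ℂ) - N).det = 0 := by
    rw [Matrix.det_fin_two]
    simp only [Matrix.sub_apply, Matrix.smul_apply, Matrix.one_apply, smul_eq_mul]
    norm_num
    rw [ht2] at hquad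
    linear_combination hquad + hd2
  obtain ⟨v, hv0, hv⟩ := (Matrix.exists_mulVec_eq_zero_iff).mpr h0
  have hev : N.mulVec v = μ • v := by
    rw [Matrix.sub_mulVec, Matrix.smul_mulVec, Matrix.one_mulVec, sub_eq_zero] at hv
    exact hv.symm
  have hpow : ∀ n : ℕ, (N ^ n).mulVec v = μ ^ n • v := by
    intro n
    induction n with
    | zero => simp
    | succ n ih =>
      rw [pow_succ, ← Matrix.mulVec_mulVec, hev, Matrix.mulVec_smul, ih, smul_smul, pow_succ]
      ring_nf
  have hNh : N ^ h = 1 := by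
    rw [hN, ← Matrix.SpecialLinearGroup.coe_pow, hM, Matrix.SpecialLinearGroup.coe_one]
  have hμh : μ ^ h = 1 := by
    have h1 : μ ^ h • v = v := by rw [← hpow, hNh, Matrix.one_mulVec]
    have h2 : (μ ^ h - 1) • v = 0 := by rw [sub_smul, one_smul, h1, sub_self]
    rcases smul_eq_zero.mp h2 with h3 | h3
    · exact sub_eq_zero.mp h3
    · exact absurd h3 hv0
  have htμ : t = μ + μ⁻¹ := by
    have h4 : t * μ = μ ^ 2 + 1 := by linear_combination -hquad
    field_simp
    linear_combination h4
  obtain ⟨i, -, hi⟩ := hζ.eq_pow_of_pow_eq_one hμh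
  have hζK : ζ ∈ IntermediateField.adjoin ℚ {ζ} := IntermediateField.mem_adjoin_simple_self ℚ ζ
  have hμK : μ ∈ IntermediateField.adjoin ℚ {ζ} := hi ▸ pow_mem hζK i
  rw [htμ]
  exact add_mem hμK (inv_mem hμK)

/-- Key structural lemma: traces of words lie in any intermediate field containing
the traces of the two generators and of their product. -/
private lemma word_trace_mem (K : IntermediateField ℚ ℂ)
    (A B : Matrix.SpecialLinearGroup (Fin 2) ℂ)
    (hxK : Matrix.trace (A : Matrix (Fin 2) (Fin 2) ℂ) ∈ K)
    (hyK : Matrix.trace (B : Matrix (Fin 2) (Fin 2) ℂ) ∈ K)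
    (hzK : Matrix.trace ((A : Matrix (Fin 2) (Fin 2) ℂ) * (B : Matrix (Fin 2) (Fin 2) ℂ)) ∈ K)
    (W : Matrix.SpecialLinearGroup (Fin 2) ℂ)
    (hW : W ∈ Subgroup.closure ({A, B} : Set (Matrix.SpecialLinearGroup (Fin 2) ℂ))) :
    Matrix.trace (W : Matrix (Fin 2) (Fin 2) ℂ) ∈ K := by
  set MA := (A : Matrix (Fin 2) (Fin 2) ℂ) with hMA
  set MB := (B : Matrix (Fin 2) (Fin 2) ℂ) with hMB
  set x := Matrix.trace MA with hxd
  set y := Matrix.trace MB with hyd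
  set z := Matrix.trace (MA * MB) with hzd
  have hdA : MA.det = 1 := A.prop
  have hdB : MB.det = 1 := B.prop
  have hdC : (MA * MB).det = 1 := by rw [Matrix.det_mul, hdA, hdB, one_mul]
  -- the nine product identities
  have hAA : MA * MA = x • MA - 1 := by
    rw [hxd, CH2, hdA, one_smul]
  have hBB : MB * MB = y • MB - 1 := by
    rw [hyd, CH2, hdB, one_smul]
  have hCC : (MA * MB) * (MA * MB) = z • (MA * MB) - 1 := by
    rw [hzd, CH2, hdC, one_smul]
  have hBA : MB * MA = (z - x * y) • 1 + y • MA + x • MB - MA * MB := by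
    have h2 := CH2' MA MB
    rw [← hxd, ← hyd, ← hzd] at h2
    rw [eq_sub_iff_add_eq, add_comm (MB * MA), h2]
    module
  have hAC : MA * (MA * MB) = x • (MA * MB) - MB := by
    rw [← mul_assoc, hAA, sub_mul, smul_mul_assoc, one_mul]
  have hCB : (MA * MB) * MB = y • (MA * MB) - MA := by
    rw [mul_assoc, hBB, mul_sub, mul_smul_comm, mul_one]
  have hCA : (MA * MB) * MA = (-y) • 1 + z • MA + MB := by
    rw [mul_assoc, hBA]
    simp only [mul_add, mul_sub, mul_smul_comm, mul_one]
    rw [hAA, hAC]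
    module
  have hBC : MB * (MA * MB) = MA + z • MB - x • 1 := by
    rw [← mul_assoc, hBA]
    simp only [sub_mul, add_mul, smul_mul_assoc, one_mul]
    rw [hBB, hCB]
    module
  -- every word is a K-combination of 1, A, B, AB
  have m3 : ∀ {u v w : ℂ}, u ∈ K → v ∈ K → w ∈ K → u * v * w ∈ K :=
    fun hu hv hw => mul_mem (mul_mem hu hv) hw
  have m4 : ∀ {u v w u' : ℂ}, u ∈ K → v ∈ K → w ∈ K → u' ∈ K → u * v * w * u' ∈ K :=
    fun hu hv hw hu' => mul_mem (m3 hu hv hw) hu'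
  have main : ∀ w ∈ Subgroup.closure ({A, B} : Set (Matrix.SpecialLinearGroup (Fin 2) ℂ)),
      ∃ p q r s : ℂ, p ∈ K ∧ q ∈ K ∧ r ∈ K ∧ s ∈ K ∧
        (w : Matrix (Fin 2) (Fin 2) ℂ) = p • 1 + q • MA + r • MB + s • (MA * MB) := by
    intro w hw
    induction hw using Subgroup.closure_induction with
    | mem g hg =>
      rcases hg with hg | hg
      · subst hg
        exact ⟨0, 1, 0, 0, zero_mem K, one_mem K, zero_mem K, zero_mem K, by
          rw [← hMA]; module⟩
      · rw [Set.mem_singleton_iff] at hg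
        subst hg
        exact ⟨0, 0, 1, 0, zero_mem K, zero_mem K, one_mem K, zero_mem K, by
          rw [← hMB]; module⟩
    | one =>
      exact ⟨1, 0, 0, 0, one_mem K, zero_mem K, zero_mem K, zero_mem K, by
        rw [Matrix.SpecialLinearGroup.coe_one]; module⟩
    | mul g g' hg hg' ihg ihg' =>
      obtain ⟨p, q, r, s, hp, hq, hr, hs, hgeq⟩ := ihg
      obtain ⟨p', q', r', s', hp', hq', hr', hs', hgeq'⟩ := ihg'
      refine ⟨p * p' - q * q' - r * q' * (x * y) + r * q' * z - s * q' * y - r * r'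
          - r * s' * x - s * s',
        p * q' + q * p' + q * q' * x + r * q' * y + s * q' * z + r * s' - s * r',
        p * r' + r * p' - q * s' + r * q' * x + s * q' + r * r' * y + r * s' * z,
        p * s' + s * p' + q * r' + q * s' * x - r * q' + s * r' * y + s * s' * z,
        ?_, ?_, ?_, ?_, ?_⟩
      · exact (sub_mem (sub_mem (sub_mem (sub_mem (add_mem (sub_mem (sub_mem (mul_mem hp hp') (mul_mem hq hq')) (mul_mem (mul_mem hr hq') (mul_mem hxK hyK))) (mul_mem (mul_mem hr hq') hzK)) (mul_mem (mul_mem hs hq') hyK)) (mul_mem hr hr')) (mul_mem (mul_mem hr hs') hxK)) (mul_mem hs hs'))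
      · exact (sub_mem (add_mem (add_mem (add_mem (add_mem (add_mem (mul_mem hp hq') (mul_mem hq hp')) (mul_mem (mul_mem hq hq') hxK)) (mul_mem (mul_mem hr hq') hyK)) (mul_mem (mul_mem hs hq') hzK)) (mul_mem hr hs')) (mul_mem hs hr'))
      · exact (add_mem (add_mem (add_mem (add_mem (sub_mem (add_mem (mul_mem hp hr') (mul_mem hr hp')) (mul_mem hq hs')) (mul_mem (mul_mem hr hq') hxK)) (mul_mem hs hq')) (mul_mem (mul_mem hr hr') hyK)) (mul_mem (mul_mem hr hs') hzK))
      · exact (add_mem (add_mem (sub_mem (add_mem (add_mem (add_mem (mul_mem hp hs') (mul_mem hs hp')) (mul_mem hq hr')) (mul_mem (mul_mem hq hs') hxK)) (mul_mem hr hq')) (mul_mem (mul_mem hs hr') hyK)) (mul_mem (mul_mem hs hs') hzK))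
      · rw [Matrix.SpecialLinearGroup.coe_mul, hgeq, hgeq']
        simp only [add_mul, mul_add, smul_mul_assoc, mul_smul_comm, one_mul, mul_one, smul_smul]
        rw [hAA, hAC, hBA, hBB, hBC, hCA, hCB, hCC]
        module
    | inv g hg ihg =>
      obtain ⟨p, q, r, s, hp, hq, hr, hs, hgeq⟩ := ihg
      have htr : Matrix.trace (g : Matrix (Fin 2) (Fin 2) ℂ) = 2 * p + q * x + r * y + s * z := by
        rw [hgeq]
        simp only [Matrix.trace_add, Matrix.trace_smul, Matrix.trace_one, smul_eq_mul,
          Fintype.card_fin]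
        rw [hxd, hyd, hzd]
        push_cast
        ring
      have hCH : (g : Matrix (Fin 2) (Fin 2) ℂ) *
          ((Matrix.trace (g : Matrix (Fin 2) (Fin 2) ℂ)) • 1 - (g : Matrix (Fin 2) (Fin 2) ℂ))
          = 1 := by
        rw [mul_sub, mul_smul_comm, mul_one, CH2, g.prop, one_smul, sub_sub_cancel]
      have hinvg : ((g⁻¹ : Matrix.SpecialLinearGroup (Fin 2) ℂ) : Matrix (Fin 2) (Fin 2) ℂ)
          = (Matrix.trace (g : Matrix (Fin 2) (Fin 2) ℂ)) • 1 - (g : Matrix (Fin 2) (Fin 2) ℂ) := by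
        refine left_inv_eq_right_inv ?_ hCH
        rw [← Matrix.SpecialLinearGroup.coe_mul, inv_mul_cancel,
          Matrix.SpecialLinearGroup.coe_one]
      refine ⟨2 * p + q * x + r * y + s * z - p, -q, -r, -s,
        sub_mem (add_mem (add_mem (add_mem (mul_mem (by simpa using K.algebraMap_mem (2:ℚ)) hp)
          (mul_mem hq hxK)) (mul_mem hr hyK)) (mul_mem hs hzK)) hp,
        neg_mem hq, neg_mem hr, neg_mem hs, ?_⟩
      rw [hinvg, htr, hgeq]
      module
  obtain ⟨p, q, r, s, hp, hq, hr, hs, hWeq⟩ := main W hW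
  have htr : Matrix.trace (W : Matrix (Fin 2) (Fin 2) ℂ) = 2 * p + q * x + r * y + s * z := by
    rw [hWeq]
    simp only [Matrix.trace_add, Matrix.trace_smul, Matrix.trace_one, smul_eq_mul,
      Fintype.card_fin]
    rw [hxd, hyd, hzd]
    push_cast
    ring
  rw [htr]
  exact add_mem (add_mem (add_mem (mul_mem (by simpa using K.algebraMap_mem (2:ℚ)) hp)
    (mul_mem hq hxK)) (mul_mem hr hyK)) (mul_mem hs hzK)

/-- If `A, B ∈ SL₂(ℂ)` satisfy `A^(2a) = B^(2b) = (AB)^(2c) = I`, then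
the trace of any word in `A` and `B` lies in `ℚ(ζ_h)` where `h = 2·lcm(a,b,c)`. -/
theorem trace_word_mem_cyclotomic (a b c : ℕ) (ha : 0 < a) (hb : 0 < b) (hc : 0 < c)
    (A B : Matrix.SpecialLinearGroup (Fin 2) ℂ)
    (hA : A ^ (2 * a) = 1) (hB : B ^ (2 * b) = 1) (hAB : (A * B) ^ (2 * c) = 1)
    (h : ℕ) (hh : h = 2 * Nat.lcm a (Nat.lcm b c))
    (ζ : ℂ) (hζ : ζ = Complex.exp (2 * Real.pi * Complex.I / h))
    (W : Matrix.SpecialLinearGroup (Fin 2) ℂ)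
    (hW : W ∈ Subgroup.closure ({A, B} : Set (Matrix.SpecialLinearGroup (Fin 2) ℂ))) :
    Matrix.trace (W : Matrix (Fin 2) (Fin 2) ℂ) ∈ IntermediateField.adjoin ℚ {ζ} := by
  have hh0 : h ≠ 0 := by
    rw [hh]
    have hl : 0 < Nat.lcm a (Nat.lcm b c) :=
      Nat.pos_of_ne_zero (Nat.lcm_ne_zero ha.ne' (Nat.lcm_ne_zero hb.ne' hc.ne'))
    omega
  have hζprim : IsPrimitiveRoot ζ h := by
    rw [hζ]; exact Complex.isPrimitiveRoot_exp h hh0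
  -- powers
  have pow_one_of_dvd : ∀ (M : Matrix.SpecialLinearGroup (Fin 2) ℂ) (n : ℕ),
      M ^ n = 1 → n ∣ h → M ^ h = 1 := by
    intro M n hM hdvd
    obtain ⟨k, hk⟩ := hdvd
    rw [hk, pow_mul, hM, one_pow]
  have hAh : A ^ h = 1 := pow_one_of_dvd A (2 * a) hA
    (by rw [hh]; exact Nat.mul_dvd_mul_left 2 (Nat.dvd_lcm_left _ _))
  have hBh : B ^ h = 1 := pow_one_of_dvd B (2 * b) hB
    (by rw [hh]
        exact Nat.mul_dvd_mul_left 2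
          ((Nat.dvd_lcm_left b c).trans (Nat.dvd_lcm_right a (Nat.lcm b c))))
  have hABh : (A * B) ^ h = 1 := pow_one_of_dvd (A * B) (2 * c) hAB
    (by rw [hh]
        exact Nat.mul_dvd_mul_left 2
          ((Nat.dvd_lcm_right b c).trans (Nat.dvd_lcm_right a (Nat.lcm b c))))
  have hxK := sl2_trace_mem h hh0 ζ hζprim A hAh
  have hyK := sl2_trace_mem h hh0 ζ hζprim B hBh
  have hzK' := sl2_trace_mem h hh0 ζ hζprim (A * B) hABh
  rw [Matrix.SpecialLinearGroup.coe_mul] at hzK'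
  exact word_trace_mem (IntermediateField.adjoin ℚ {ζ}) A B hxK hyK hzK' W hW
end
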